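/- Let n ≥ 1 and 1 ≤ t ≤ n+1. Then Bob(T_n(t)) holds if and only if t ≤ ⌊n/2⌋ + 1. -/

import Mathlib

/-- The board `[n] = {1, …, n}` as a finite set of natural numbers. -/
def board (n : ℕ) : Finset ℕ := Finset.Icc 1 n

/-- The order-preserving relabelling of `[n] \ {x}` onto `[n-1]`:
elements below `x` are unchanged, elements above `x` drop by one. -/
def stdElt (x r : ℕ) : ℕ := if r < x then r else r - 1

/-- Standardise a set avoiding `x`: relabel it via `stdElt x`. -/
def stdSet (x : ℕ) (S : Finset ℕ) : Finset ℕ := S.image (stdElt x)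

/-- The standardised section `F_x^+ = { S \ {x} : x ∈ S ∈ F }`,
viewed as a family of subsets of `[n-1]`. -/
def secPlus (F : Set (Finset ℕ)) (x : ℕ) : Set (Finset ℕ) :=
  {T | ∃ S ∈ F, x ∈ S ∧ T = stdSet x (S.erase x)}

/-- The standardised section `F_x^- = { S ∈ F : x ∉ S }`,
viewed as a family of subsets of `[n-1]`. -/
def secMinus (F : Set (Finset ℕ)) (x : ℕ) : Set (Finset ℕ) :=
  {T | ∃ S ∈ F, x ∉ S ∧ T = stdSet x S}

mutual
  /-- `AliceWins n k F`: Alice wins her `F`-game, where `F` is a family of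
  `k`-subsets of `[n]`.  Terminal games (`k = 0` or `k = n`) are won iff `F`
  is nonempty; otherwise Alice needs a first offer `x` such that Bob wins both
  his `F_x^+`-game and his `F_x^-`-game. -/
  def AliceWins (n k : ℕ) (F : Set (Finset ℕ)) : Prop :=
    if h : k = 0 ∨ n ≤ k then F.Nonempty
    else ∃ x ∈ board n,
      BobWins (n - 1) (k - 1) (secPlus F x) ∧ BobWins (n - 1) k (secMinus F x)
  termination_by n
  decreasing_by all_goals omega

  /-- `BobWins n k F`: Bob wins his `F`-game, where `F` is a family of
  `k`-subsets of `[n]`.  Terminal games (`k = 0` or `k = n`) are won iff `F`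
  is nonempty; otherwise Bob needs, for every first offer `x`, that Alice wins
  her `F_x^+`-game or her `F_x^-`-game. -/
  def BobWins (n k : ℕ) (F : Set (Finset ℕ)) : Prop :=
    if h : k = 0 ∨ n ≤ k then F.Nonempty
    else ∀ x ∈ board n,
      AliceWins (n - 1) (k - 1) (secPlus F x) ∨ AliceWins (n - 1) k (secMinus F x)
  termination_by n
  decreasing_by all_goals omega
end

/-- `S ⪯ T` in the pointwise order: the increasing enumerations of `S` and `T`
have the same length and are pointwise `≤`. -/
def PointwiseLE (S T : Finset ℕ) : Prop :=
  List.Forall₂ (· ≤ ·) (S.sort (· ≤ ·)) (T.sort (· ≤ ·))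

/-- `F` consists of `k`-element subsets of `[n]`. -/
def IsFamilyOn (n k : ℕ) (F : Set (Finset ℕ)) : Prop :=
  ∀ S ∈ F, S ⊆ board n ∧ S.card = k

/-- `F` is pointwise-increasing as a family of `k`-subsets of `[n]`:
it is upwards closed in the pointwise order. -/
def IsIncreasingFamily (n k : ℕ) (F : Set (Finset ℕ)) : Prop :=
  ∀ S T : Finset ℕ, S ∈ F → T ⊆ board n → T.card = k → PointwiseLE S T → T ∈ F


/-! Taking the offered element `x` into the set ends a game with `k = 1`, won iff `t ≤ x`;
leaving it out passes to the singleton family on `[n - 1]` with threshold `t - 1` if `x < t`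
and `t` otherwise. The critical offers are `x = 1` in Bob's game and `x = n` in Alice's, giving
`Bob_n(t) ↔ t ≤ 1 ∨ Alice_{n-1}(t - 1)` and `Alice_n(t) ↔ t ≤ n ∧ Bob_{n-1}(t)`, which solve to
the thresholds `⌊n/2⌋ + 1` and `⌊(n+1)/2⌋`. -/

/-- The family `T_n(t)`. -/
def singletonFamily (n t : ℕ) : Set (Finset ℕ) := {S : Finset ℕ | ∃ r : ℕ, t ≤ r ∧ r ≤ n ∧ S = {r}}

section Unfolding

variable {n k : ℕ} {F : Set (Finset ℕ)}

theorem aliceWins_iff_nonempty (h : k = 0 ∨ n ≤ k) : AliceWins n k F ↔ F.Nonempty := by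
  rw [AliceWins, dif_pos h]

theorem bobWins_iff_nonempty (h : k = 0 ∨ n ≤ k) : BobWins n k F ↔ F.Nonempty := by
  rw [BobWins, dif_pos h]

theorem aliceWins_iff_exists (hk0 : k ≠ 0) (hkn : k < n) :
    AliceWins n k F ↔ ∃ x ∈ board n,
      BobWins (n - 1) (k - 1) (secPlus F x) ∧ BobWins (n - 1) k (secMinus F x) := by
  rw [AliceWins, dif_neg (by omega)]

theorem bobWins_iff_forall (hk0 : k ≠ 0) (hkn : k < n) :
    BobWins n k F ↔ ∀ x ∈ board n,
      AliceWins (n - 1) (k - 1) (secPlus F x) ∨ AliceWins (n - 1) k (secMinus F x) := by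
  rw [BobWins, dif_neg (by omega)]

end Unfolding

theorem stdElt_of_lt {x r : ℕ} (h : r < x) : stdElt x r = r := if_pos h

theorem stdElt_of_le {x r : ℕ} (h : x ≤ r) : stdElt x r = r - 1 := if_neg (by omega)

theorem stdSet_singleton (x r : ℕ) : stdSet x {r} = {stdElt x r} := Finset.image_singleton _ _

section SingletonFamily

variable {n t x : ℕ}

theorem singletonFamily_nonempty_iff : (singletonFamily n t).Nonempty ↔ t ≤ n := by
  constructor
  · rintro ⟨-, r, htr, hrn, -⟩
    omega
  · exact fun h => ⟨{n}, n, h, le_rfl, rfl⟩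

theorem secPlus_singletonFamily_nonempty_iff :
    (secPlus (singletonFamily n t) x).Nonempty ↔ t ≤ x ∧ x ≤ n := by
  constructor
  · rintro ⟨-, -, ⟨r, htr, hrn, rfl⟩, hx, -⟩
    rw [Finset.mem_singleton] at hx
    omega
  · rintro ⟨htx, hxn⟩
    exact ⟨_, {x}, ⟨x, htx, hxn, rfl⟩, Finset.mem_singleton_self x, rfl⟩

theorem secMinus_singletonFamily_of_lt (hx : 1 ≤ x) (hxt : x < t) :
    secMinus (singletonFamily n t) x = singletonFamily (n - 1) (t - 1) := by
  ext T
  constructor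
  · rintro ⟨-, ⟨r, htr, hrn, rfl⟩, -, rfl⟩
    exact ⟨r - 1, by omega, by omega, by rw [stdSet_singleton, stdElt_of_le (by omega)]⟩
  · rintro ⟨s, hts, hsn, rfl⟩
    refine ⟨{s + 1}, ⟨s + 1, by omega, by omega, rfl⟩, by simp only [Finset.mem_singleton]; omega, ?_⟩
    rw [stdSet_singleton, stdElt_of_le (by omega), Nat.add_sub_cancel]

theorem secMinus_singletonFamily_of_le (hx : 1 ≤ x) (htx : t ≤ x) (hxn : x ≤ n) :
    secMinus (singletonFamily n t) x = singletonFamily (n - 1) t := by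
  ext T
  constructor
  · rintro ⟨-, ⟨r, htr, hrn, rfl⟩, hxS, rfl⟩
    rw [Finset.mem_singleton] at hxS
    rw [stdSet_singleton]
    rcases lt_or_gt_of_ne hxS with hxr | hrx
    · exact ⟨r - 1, by omega, by omega, by rw [stdElt_of_le hxr.le]⟩
    · exact ⟨r, htr, by omega, by rw [stdElt_of_lt hrx]⟩
  · rintro ⟨s, hts, hsn, rfl⟩
    rcases lt_or_ge s x with hsx | hxs
    · refine ⟨{s}, ⟨s, hts, by omega, rfl⟩, by simp only [Finset.mem_singleton]; omega, ?_⟩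
      rw [stdSet_singleton, stdElt_of_lt hsx]
    · refine ⟨{s + 1}, ⟨s + 1, by omega, by omega, rfl⟩, by simp only [Finset.mem_singleton]; omega, ?_⟩
      rw [stdSet_singleton, stdElt_of_le (by omega), Nat.add_sub_cancel]

theorem bobWins_singletonFamily_succ_iff (hn : 1 ≤ n) :
    BobWins (n + 1) 1 (singletonFamily (n + 1) t) ↔
      t ≤ 1 ∨ AliceWins n 1 (singletonFamily n (t - 1)) := by
  simp only [bobWins_iff_forall one_ne_zero (by omega : 1 < n + 1), Nat.add_sub_cancel,
    aliceWins_iff_nonempty (Or.inl rfl : 1 - 1 = 0 ∨ _), secPlus_singletonFamily_nonempty_iff,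
    board, Finset.mem_Icc]
  constructor
  · refine fun hBob => or_iff_not_imp_left.2 fun ht => ?_
    have hReply := hBob 1 ⟨le_rfl, by omega⟩
    rw [secMinus_singletonFamily_of_lt le_rfl (by omega), Nat.add_sub_cancel] at hReply
    exact hReply.resolve_left (by omega)
  · rintro h x ⟨hx, hxn⟩
    rcases le_or_gt t x with htx | hxt
    · exact Or.inl ⟨htx, hxn⟩
    · rw [secMinus_singletonFamily_of_lt hx hxt, Nat.add_sub_cancel]
      exact Or.inr (h.resolve_left (by omega))

theorem aliceWins_singletonFamily_succ_iff (hn : 1 ≤ n) :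
    AliceWins (n + 1) 1 (singletonFamily (n + 1) t) ↔
      t ≤ n + 1 ∧ BobWins n 1 (singletonFamily n t) := by
  simp only [aliceWins_iff_exists one_ne_zero (by omega : 1 < n + 1), Nat.add_sub_cancel,
    bobWins_iff_nonempty (Or.inl rfl : 1 - 1 = 0 ∨ _), secPlus_singletonFamily_nonempty_iff,
    board, Finset.mem_Icc]
  constructor
  · rintro ⟨x, ⟨hx, hxn⟩, ⟨htx, -⟩, hBob⟩
    rw [secMinus_singletonFamily_of_le hx htx hxn, Nat.add_sub_cancel] at hBob
    exact ⟨by omega, hBob⟩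
  · rintro ⟨htn, hBob⟩
    refine ⟨n + 1, ⟨by omega, le_rfl⟩, ⟨htn, le_rfl⟩, ?_⟩
    rwa [secMinus_singletonFamily_of_le (by omega) htn le_rfl, Nat.add_sub_cancel]

theorem bobWins_and_aliceWins_singletonFamily_iff (hn : 1 ≤ n) :
    (BobWins n 1 (singletonFamily n t) ↔ t ≤ n / 2 + 1) ∧
      (AliceWins n 1 (singletonFamily n t) ↔ t ≤ (n + 1) / 2) := by
  induction n, hn using Nat.le_induction generalizing t with
  | base =>
    rw [bobWins_iff_nonempty (Or.inr le_rfl), aliceWins_iff_nonempty (Or.inr le_rfl),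
      singletonFamily_nonempty_iff]
    omega
  | succ n hn ih =>
    rw [bobWins_singletonFamily_succ_iff hn, aliceWins_singletonFamily_succ_iff hn,
      (ih (t := t - 1)).2, (ih (t := t)).1]
    omega

end SingletonFamily

/-- Bob wins his game on the singleton family
`T_n(t) = { {r} : t ≤ r ≤ n }` if and only if `t ≤ ⌊n/2⌋ + 1`. -/
theorem bob_singleton_family (n t : ℕ) (hn : 1 ≤ n) (ht1 : 1 ≤ t) (ht : t ≤ n + 1) :
    BobWins n 1 {S : Finset ℕ | ∃ r : ℕ, t ≤ r ∧ r ≤ n ∧ S = {r}} ↔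
      t ≤ n / 2 + 1 :=
  bobWins_and_aliceWins_singletonFamily_iff hn |>.1
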